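/- For every real number a > 2, the 6×6 matrix M_a has nonnegative rank at least 4, i.e., rank₊(M_a) ≥ 4: there is no factorization M_a = U·V with U ∈ ℝ^{6×3} and V ∈ ℝ^{3×6} entrywise nonnegative. -/

import Mathlib

/-!
The matrix `hexM a` has rank 3, and the three vectors `hexKernel` lie in both its left and its
right kernel. In a factorization `hexM a = U * V` of inner dimension 3 some 3 × 3 minor of
`hexM a` is nonzero, so `V` (resp. `U`) has full rank and every kernel relation of `hexM a`
passes to the columns of `U` (resp. the rows of `V`). These therefore lie in the cone `hexCone`
of nonnegative vectors satisfying the relations, a cone over a hexagon. The bilinear form of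
`hexCert` is nonnegative on `hexCone × hexCone`, so `∑ₖ (Uᵀ k) ⬝ᵥ hexCert *ᵥ (V k) ≥ 0`; but this
sum is the linear functional `trace (hexCert * (hexM a)ᵀ) = (2 - a) / a`, negative for `a > 2`.
-/


/-- The nonnegative rank of a matrix: the smallest `r` such that `M = U * V`
with `U : p × r` and `V : r × n` entrywise nonnegative. -/
noncomputable def nnRank {p n : ℕ} (M : Matrix (Fin p) (Fin n) ℝ) : ℕ :=
  sInf {r : ℕ | ∃ (U : Matrix (Fin p) (Fin r) ℝ) (V : Matrix (Fin r) (Fin n) ℝ),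
    (∀ i k, 0 ≤ U i k) ∧ (∀ k j, 0 ≤ V k j) ∧ M = U * V}

/-- The nested-hexagon matrix `M_a` for a parameter `a`. -/
noncomputable def hexM (a : ℝ) : Matrix (Fin 6) (Fin 6) ℝ :=
  (1 / a) • !![1,     a,     2*a-1, 2*a-1, a,     1;
               1,     1,     a,     2*a-1, 2*a-1, a;
               a,     1,     1,     a,     2*a-1, 2*a-1;
               2*a-1, a,     1,     1,     a,     2*a-1;
               2*a-1, 2*a-1, a,     1,     1,     a;
               a,     2*a-1, 2*a-1, a,     1,     1]

open Matrix

section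

variable {K : Type*} [Field K] {m n r : Type*} [Fintype r]

theorem vecMul_eq_zero_of_eq_mul [DecidableEq r] [Fintype m] {M : Matrix m n K}
    {U : Matrix m r K} {V : Matrix r n K} (hM : M = U * V) (s : r → m) (t : r → n)
    (hdet : (M.submatrix s t).det ≠ 0) {y : m → K} (hy : y ᵥ* M = 0) : y ᵥ* U = 0 := by
  have hV : IsUnit (V.submatrix id t) := by
    rw [hM, submatrix_mul _ _ _ _ _ Function.bijective_id, det_mul] at hdet
    rw [isUnit_iff_isUnit_det, isUnit_iff_ne_zero]
    exact right_ne_zero_of_mul hdet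
  refine vecMul_injective_of_isUnit hV ?_
  have hUV : y ᵥ* U ᵥ* V = 0 := by rw [vecMul_vecMul, ← hM, hy]
  ext i
  simpa [vecMul, dotProduct] using congrFun hUV (t i)

theorem mulVec_eq_zero_of_eq_mul [DecidableEq r] [Fintype n] {M : Matrix m n K}
    {U : Matrix m r K} {V : Matrix r n K} (hM : M = U * V) (s : r → m) (t : r → n)
    (hdet : (M.submatrix s t).det ≠ 0) {x : n → K} (hx : M *ᵥ x = 0) : V *ᵥ x = 0 := by
  rw [← vecMul_transpose] at hx ⊢
  refine vecMul_eq_zero_of_eq_mul (by rw [hM, transpose_mul]) t s ?_ hx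
  rwa [← transpose_submatrix, det_transpose]

theorem trace_mul_transpose_eq_sum_dotProduct [Fintype m] [Fintype n] (W : Matrix m n K)
    {M : Matrix m n K} {U : Matrix m r K} {V : Matrix r n K} (hM : M = U * V) :
    trace (W * Mᵀ) = ∑ k, Uᵀ k ⬝ᵥ W *ᵥ V k := by
  rw [hM, transpose_mul, ← Matrix.mul_assoc, trace_mul_comm, ← Matrix.mul_assoc]
  simp only [trace, diag, mul_apply', dotProduct_mulVec]
  rfl

end

def HasNonnegFactorization {p n : ℕ} (M : Matrix (Fin p) (Fin n) ℝ) (r : ℕ) : Prop :=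
  ∃ (U : Matrix (Fin p) (Fin r) ℝ) (V : Matrix (Fin r) (Fin n) ℝ),
    (∀ i k, 0 ≤ U i k) ∧ (∀ k j, 0 ≤ V k j) ∧ M = U * V

namespace HasNonnegFactorization

variable {p n : ℕ} {M : Matrix (Fin p) (Fin n) ℝ}

theorem of_nonneg (hM : ∀ i j, 0 ≤ M i j) : HasNonnegFactorization M n :=
  ⟨M, 1, hM, fun k j => by by_cases h : k = j <;> simp [one_apply, h], (Matrix.mul_one M).symm⟩

theorem mono {k r : ℕ} (h : HasNonnegFactorization M k) (hkr : k ≤ r) :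
    HasNonnegFactorization M r := by
  obtain ⟨U, V, hU, hV, rfl⟩ := h
  let P : Matrix (Fin k) (Fin r) ℝ := (1 : Matrix (Fin r) (Fin r) ℝ).submatrix (Fin.castLE hkr) id
  have hP (i : Fin k) (j : Fin r) : 0 ≤ P i j := by
    by_cases h : Fin.castLE hkr i = j <;> simp [P, one_apply, h]
  have hPP : P * Pᵀ = 1 := by
    ext i j
    simp [P, mul_apply, one_apply, Fin.castLE_inj]
  refine ⟨U * P, Pᵀ * V, fun i j => ?_, fun i j => ?_, ?_⟩
  · rw [mul_apply]; exact Finset.sum_nonneg fun l _ => mul_nonneg (hU i l) (hP l j)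
  · rw [mul_apply]; exact Finset.sum_nonneg fun l _ => mul_nonneg (hP l i) (hV l j)
  · rw [Matrix.mul_assoc, ← Matrix.mul_assoc P, hPP, Matrix.one_mul]

end HasNonnegFactorization

theorem lt_nnRank_of_not_hasNonnegFactorization {p n r : ℕ} {M : Matrix (Fin p) (Fin n) ℝ}
    (hM : ∀ i j, 0 ≤ M i j) (h : ¬ HasNonnegFactorization M r) : r < nnRank M := by
  have hmem : nnRank M ∈ {r | HasNonnegFactorization M r} :=
    Nat.sInf_mem ⟨n, HasNonnegFactorization.of_nonneg hM⟩
  by_contra! hle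
  exact h (hmem.mono hle)

theorem hexM_nonneg {a : ℝ} (ha : 1 / 2 ≤ a) (i j : Fin 6) : 0 ≤ hexM a i j := by
  have ha₀ : 0 ≤ 1 / a := one_div_nonneg.2 (by linarith)
  have ha₁ : 0 ≤ 2 * a - 1 := by linarith
  rw [hexM, Matrix.smul_apply, smul_eq_mul]
  refine mul_nonneg ha₀ ?_
  fin_cases i <;> fin_cases j <;> simp <;> linarith

def hexKernel : Fin 3 → Fin 6 → ℝ :=
  ![![2, -2, 1, 0, 0, -1], ![1, 0, -1, 1, 0, -1], ![1, -1, 1, -1, 1, -1]]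

theorem hexKernel_vecMul_hexM (a : ℝ) (k : Fin 3) : hexKernel k ᵥ* hexM a = 0 := by
  ext j
  fin_cases k <;> fin_cases j <;>
    simp [hexKernel, hexM, vecMul, dotProduct, Fin.sum_univ_succ] <;> ring

theorem hexM_mulVec_hexKernel (a : ℝ) (k : Fin 3) : hexM a *ᵥ hexKernel k = 0 := by
  ext i
  fin_cases k <;> fin_cases i <;>
    simp [hexKernel, hexM, mulVec, dotProduct, Fin.sum_univ_succ] <;> ring

theorem det_hexM_submatrix_castLE {a : ℝ} (ha : a ≠ 0) :
    ((hexM a).submatrix (Fin.castLE (by norm_num : 3 ≤ 6)) (Fin.castLE (by norm_num))).det =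
      (a - 1) ^ 2 / a ^ 2 := by
  rw [det_fin_three]
  simp only [hexM, one_div, smul_of, smul_cons, smul_eq_mul, mul_one, smul_empty, Fin.isValue,
    submatrix_apply, Fin.castLE_zero, of_apply, cons_val', cons_val_zero, cons_val_fin_one,
    Fin.reduceCastLE, cons_val_one, cons_val]
  field_simp
  ring

def hexCone : Set (Fin 6 → ℝ) := {u | 0 ≤ u ∧ ∀ k, hexKernel k ⬝ᵥ u = 0}

/-- The plane cut out by `hexKernel`, parametrised by the first two coordinates and by `y`, the
common value of all six coordinates at the centre of the hexagon. -/
def hexPoint (p₀ p₁ y : ℝ) : Fin 6 → ℝ :=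
  ![p₀, p₁, p₁ - p₀ + y, 2 * y - p₀, 2 * y - p₁, p₀ - p₁ + y]

theorem eq_hexPoint_of_mem_hexCone {u : Fin 6 → ℝ} (hu : u ∈ hexCone) :
    u = hexPoint (u 0) (u 1) (u 5 + u 1 - u 0) := by
  have h₀ := hu.2 0
  have h₁ := hu.2 1
  have h₂ := hu.2 2
  simp only [hexKernel, dotProduct, Fin.sum_univ_succ] at h₀ h₁ h₂
  ext i
  fin_cases i <;> simp [hexPoint] at h₀ h₁ h₂ ⊢ <;> linarith

theorem hexForm_nonneg {p₀ p₁ y q₀ q₁ z : ℝ} (hp : 0 ≤ hexPoint p₀ p₁ y)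
    (hq : 0 ≤ hexPoint q₀ q₁ z) :
    0 ≤ y * z + (p₀ - y) * (q₀ - q₁) + (p₁ - y) * (q₁ - z) := by
  obtain ⟨hp₀, hp₁, hp₂, hp₃, hp₄, hp₅⟩ : 0 ≤ p₀ ∧ 0 ≤ p₁ ∧ 0 ≤ p₁ - p₀ + y ∧ 0 ≤ 2 * y - p₀ ∧
      0 ≤ 2 * y - p₁ ∧ 0 ≤ p₀ - p₁ + y :=
    ⟨hp 0, hp 1, hp 2, hp 3, hp 4, hp 5⟩
  obtain ⟨hq₀, hq₁, hq₂, hq₃, hq₄, hq₅⟩ : 0 ≤ q₀ ∧ 0 ≤ q₁ ∧ 0 ≤ q₁ - q₀ + z ∧ 0 ≤ 2 * z - q₀ ∧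
      0 ≤ 2 * z - q₁ ∧ 0 ≤ q₀ - q₁ + z :=
    ⟨hq 0, hq 1, hq 2, hq 3, hq 4, hq 5⟩
  have hz : 0 ≤ z := by linarith
  -- The lines `p₀ = y`, `p₁ = y`, `p₀ = p₁` cut the hexagon into six triangles around its centre;
  -- on each one the form is a nonnegative combination of three products of nonnegative terms.
  rcases le_total p₀ y with h₀ | h₀ <;> rcases le_total p₁ y with h₁ | h₁ <;>
    rcases le_total p₀ p₁ with h₂ | h₂
  · linarith [mul_nonneg (sub_nonneg.2 h₂) hq₂, mul_nonneg (sub_nonneg.2 h₁) hq₃, mul_nonneg hp₀ hz]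
  · linarith [mul_nonneg (sub_nonneg.2 h₀) hq₃, mul_nonneg (sub_nonneg.2 h₂) hq₄, mul_nonneg hp₁ hz]
  · linarith [mul_nonneg (sub_nonneg.2 h₁) hq₁, mul_nonneg (sub_nonneg.2 h₀) hq₂, mul_nonneg hp₅ hz]
  · linarith [mul_nonneg (sub_nonneg.2 h₁) hq₁, mul_nonneg (sub_nonneg.2 h₀) hq₂, mul_nonneg hp₅ hz]
  · linarith [mul_nonneg (sub_nonneg.2 h₁) hq₄, mul_nonneg (sub_nonneg.2 h₀) hq₅, mul_nonneg hp₂ hz]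
  · linarith [mul_nonneg (sub_nonneg.2 h₁) hq₄, mul_nonneg (sub_nonneg.2 h₀) hq₅, mul_nonneg hp₂ hz]
  · linarith [mul_nonneg (sub_nonneg.2 h₀) hq₀, mul_nonneg (sub_nonneg.2 h₂) hq₁, mul_nonneg hp₄ hz]
  · linarith [mul_nonneg (sub_nonneg.2 h₂) hq₅, mul_nonneg (sub_nonneg.2 h₁) hq₀, mul_nonneg hp₃ hz]

def hexCert : Matrix (Fin 6) (Fin 6) ℝ :=
  !![ 4, -3, 0, 0, 0, -2;
     -2,  2, 0, 0, 0,  1;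
      0,  0, 0, 0, 0,  0;
      0,  0, 0, 0, 0,  0;
      0,  0, 0, 0, 0,  0;
     -3,  2, 0, 0, 0,  2]

theorem hexCert_nonneg {u v : Fin 6 → ℝ} (hu : u ∈ hexCone) (hv : v ∈ hexCone) :
    0 ≤ u ⬝ᵥ hexCert *ᵥ v := by
  have key := hexForm_nonneg (hu.1.trans_eq (eq_hexPoint_of_mem_hexCone hu))
    (hv.1.trans_eq (eq_hexPoint_of_mem_hexCone hv))
  convert key using 1
  simp only [dotProduct, mulVec, hexCert, of_apply, cons_val', cons_val_fin_one, Fin.sum_univ_succ,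
    Fin.isValue, cons_val_zero, cons_val_succ, Fin.succ_zero_eq_one, Fin.succ_one_eq_two,
    Fin.reduceSucc, Finset.univ_unique, Fin.default_eq_zero, Finset.sum_singleton]
  ring

theorem trace_hexCert_mul_hexM_transpose {a : ℝ} (ha : a ≠ 0) :
    trace (hexCert * (hexM a)ᵀ) = (2 - a) / a := by
  simp only [trace, hexCert, hexM, one_div, smul_of, smul_cons, smul_eq_mul, mul_one, smul_empty,
    cons_mul, Nat.succ_eq_add_one, Nat.reduceAdd, empty_mul, Equiv.symm_apply_apply, diag_apply,
    of_apply, cons_val', vecMul, dotProduct, transpose_apply, cons_val_fin_one, Fin.sum_univ_succ,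
    Fin.isValue, cons_val_zero, cons_val_succ, Finset.univ_unique, Fin.default_eq_zero,
    Finset.sum_singleton]
  field_simp
  ring

theorem not_hasNonnegFactorization_hexM_three {a : ℝ} (ha : 2 < a) :
    ¬ HasNonnegFactorization (hexM a) 3 := by
  rintro ⟨U, V, hU, hV, hM⟩
  have hdet : ((hexM a).submatrix (Fin.castLE (by norm_num)) (Fin.castLE (by norm_num)) :
      Matrix (Fin 3) (Fin 3) ℝ).det ≠ 0 := by
    rw [det_hexM_submatrix_castLE (by linarith)]
    exact div_ne_zero (pow_ne_zero 2 (by linarith)) (by positivity)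
  have hcol (k : Fin 3) : Uᵀ k ∈ hexCone := ⟨fun i => hU i k, fun l =>
    congrFun (vecMul_eq_zero_of_eq_mul hM _ _ hdet (hexKernel_vecMul_hexM a l)) k⟩
  have hrow (k : Fin 3) : V k ∈ hexCone := ⟨hV k, fun l => by
    rw [dotProduct_comm]
    exact congrFun (mulVec_eq_zero_of_eq_mul hM _ _ hdet (hexM_mulVec_hexKernel a l)) k⟩
  have hsum := trace_mul_transpose_eq_sum_dotProduct hexCert hM
  rw [trace_hexCert_mul_hexM_transpose (by linarith)] at hsum
  have hneg : (2 - a) / a < 0 := div_neg_of_neg_of_pos (by linarith) (by linarith)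
  exact hneg.not_ge (hsum ▸ Finset.sum_nonneg fun k _ => hexCert_nonneg (hcol k) (hrow k))

/-- For every `a > 2`, the hexagon matrix has nonnegative rank at least 4:
there is no entrywise nonnegative factorization of inner dimension 3. -/
theorem nnRank_hexM_ge_four {a : ℝ} (ha : 2 < a) :
    4 ≤ nnRank (hexM a) ∧
    ¬ ∃ (U : Matrix (Fin 6) (Fin 3) ℝ) (V : Matrix (Fin 3) (Fin 6) ℝ),
        (∀ i k, 0 ≤ U i k) ∧ (∀ k j, 0 ≤ V k j) ∧ hexM a = U * V := by
  have h := not_hasNonnegFactorization_hexM_three ha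
  exact ⟨lt_nnRank_of_not_hasNonnegFactorization (hexM_nonneg (by linarith)) h, h⟩
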